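/- Let α and v be real numbers and define f : (0,∞) → ℝ by f(t) = exp(−v·((1+t)^α − 1)) (the inner generator of a nested Clayton copula). Then for every integer n ≥ 1 and every t > 0, f^{(n)}(t) = f(t) · ∑_{k=1}^{n} s_{nk}(α) · (1+t)^{αk − n} · (−v)^k. -/

import Mathlib

noncomputable section

/-- Stirling numbers of the first kind `s(n,k)` (signed), real-valued,
defined by the recurrence `s(n+1,k) = s(n,k-1) - n·s(n,k)`. -/
def st1 : ℕ → ℕ → ℝ
  | 0, 0 => 1
  | 0, _ + 1 => 0
  | _ + 1, 0 => 0
  | n + 1, k + 1 => st1 n k - (n : ℝ) * st1 n (k + 1)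

/-- Stirling numbers of the second kind `S(n,k)`, real-valued,
defined by the recurrence `S(n+1,k) = S(n,k-1) + k·S(n,k)`. -/
def st2 : ℕ → ℕ → ℝ
  | 0, 0 => 1
  | 0, _ + 1 => 0
  | _ + 1, 0 => 0
  | n + 1, k + 1 => st2 n k + ((k : ℝ) + 1) * st2 n (k + 1)

/-- `snk n k x = ∑_{l=k}^n s(n,l) S(l,k) x^l`. -/
def snk (n k : ℕ) (x : ℝ) : ℝ := ∑ l ∈ Finset.Icc k n, st1 n l * st2 l k * x ^ l

lemma st2_zero_of_lt : ∀ l k : ℕ, l < k → st2 l k = 0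
  | _, 0, h => absurd h (Nat.not_lt_zero _)
  | 0, _+1, _ => rfl
  | l+1, k+1, h => by
    show st2 l k + ((k:ℝ)+1) * st2 l (k+1) = 0
    rw [st2_zero_of_lt l k (Nat.lt_of_succ_lt_succ h),
        st2_zero_of_lt l (k+1) (Nat.lt_succ_of_lt (Nat.lt_of_succ_lt_succ h))]
    ring

lemma st1_zero_of_lt : ∀ n l : ℕ, n < l → st1 n l = 0
  | _, 0, h => absurd h (Nat.not_lt_zero _)
  | 0, _+1, _ => rfl
  | n+1, l+1, h => by
    show st1 n l - (n:ℝ) * st1 n (l+1) = 0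
    rw [st1_zero_of_lt n l (Nat.lt_of_succ_lt_succ h),
        st1_zero_of_lt n (l+1) (Nat.lt_succ_of_lt (Nat.lt_of_succ_lt_succ h))]
    ring

lemma snk_eq_range (n k : ℕ) (x : ℝ) :
    snk n k x = ∑ l ∈ Finset.range (n+1), st1 n l * st2 l k * x ^ l := by
  rw [snk]
  apply Finset.sum_subset
  · intro l hl
    simp only [Finset.mem_Icc] at hl
    simp only [Finset.mem_range]; omega
  · intro l hl hl'
    simp only [Finset.mem_range] at hl
    simp only [Finset.mem_Icc] at hl'
    rw [st2_zero_of_lt l k (by omega)]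
    ring

lemma snk_zero (n : ℕ) (hn : 1 ≤ n) (x : ℝ) : snk n 0 x = 0 := by
  rw [snk_eq_range]
  apply Finset.sum_eq_zero
  intro l hl
  match l with
  | 0 =>
    obtain ⟨m, rfl⟩ : ∃ m, n = m + 1 := ⟨n - 1, by omega⟩
    show st1 (m+1) 0 * st2 0 0 * x ^ 0 = 0
    simp [st1]
  | l+1 =>
    show st1 n (l+1) * st2 (l+1) 0 * x ^ (l+1) = 0
    simp [st2]

lemma snk_top (n k : ℕ) (h : n < k) (x : ℝ) : snk n k x = 0 := by
  rw [snk, Finset.Icc_eq_empty (by omega), Finset.sum_empty]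

lemma shift_sum (n k : ℕ) (x : ℝ) :
    ∑ l ∈ Finset.range (n+1), st1 n (l+1) * st2 (l+1) (k+1) * x ^ (l+1)
      = ∑ l ∈ Finset.range (n+1), st1 n l * st2 l (k+1) * x ^ l := by
  have h := Finset.sum_range_succ' (fun l => st1 n l * st2 l (k+1) * x ^ l) (n+1)
  rw [Finset.sum_range_succ] at h
  have h1 : st1 n (n+1) * st2 (n+1) (k+1) * x^(n+1) = 0 := by
    rw [st1_zero_of_lt n (n+1) (Nat.lt_succ_self n)]; ring
  have h2 : st1 n 0 * st2 0 (k+1) * x^0 = 0 := by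
    rw [st2_zero_of_lt 0 (k+1) (Nat.succ_pos k)]; ring
  simp only [h1, h2, add_zero] at h
  linarith

lemma snk_rec (n k : ℕ) (x : ℝ) :
    snk (n+1) (k+1) x = (((k:ℝ)+1)*x - n) * snk n (k+1) x + x * snk n k x := by
  rw [snk_eq_range, snk_eq_range, snk_eq_range]
  rw [Finset.sum_range_succ']
  have h0 : st1 (n+1) 0 * st2 0 (k+1) * x ^ 0 = 0 := by simp [st1, st2]
  rw [h0, add_zero]
  have expand : ∀ l ∈ Finset.range (n+1), st1 (n+1) (l+1) * st2 (l+1) (k+1) * x ^ (l+1)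
      = ((st1 n l * st2 l k * x^l) * x + (((k:ℝ)+1) * x) * (st1 n l * st2 l (k+1) * x^l))
        - (n:ℝ) * (st1 n (l+1) * st2 (l+1) (k+1) * x^(l+1)) := by
    intro l _
    have e1 : st1 (n+1) (l+1) = st1 n l - (n:ℝ) * st1 n (l+1) := rfl
    have e2 : st2 (l+1) (k+1) = st2 l k + ((k:ℝ)+1) * st2 l (k+1) := rfl
    rw [e1, e2]
    ring
  rw [Finset.sum_congr rfl expand, Finset.sum_sub_distrib, Finset.sum_add_distrib,
      ← Finset.sum_mul, ← Finset.mul_sum, ← Finset.mul_sum, shift_sum]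
  ring

lemma snk_one (x : ℝ) : snk 1 1 x = x := by
  simp [snk, st1, st2]

lemma icc_conv (M : ℕ) (g : ℕ → ℝ) :
    ∑ k ∈ Finset.Icc 1 M, g k = ∑ j ∈ Finset.range M, g (j+1) := by
  rw [← Finset.Ico_add_one_right_eq_Icc, Finset.sum_Ico_eq_sum_range]
  exact Finset.sum_congr (by simp) (fun j _ => by rw [Nat.add_comm])

lemma alg (α v y : ℝ) (hy : 0 < y) (m : ℕ) (hm : 1 ≤ m) :
    (-v*(α*y^(α-1))) * (∑ k ∈ Finset.Icc 1 m, snk m k α * y^(α*(k:ℝ)-(m:ℝ)) * (-v)^k)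
      + ∑ k ∈ Finset.Icc 1 m, snk m k α * ((α*(k:ℝ)-(m:ℝ)) * y^(α*(k:ℝ)-(m:ℝ)-1)) * (-v)^k
    = ∑ k ∈ Finset.Icc 1 (m+1), snk (m+1) k α * y^(α*(k:ℝ)-((m+1:ℕ):ℝ)) * (-v)^k := by
  rw [icc_conv, icc_conv, icc_conv]
  have step : ∀ j ∈ Finset.range (m+1),
      snk (m+1) (j+1) α * y^(α*((j+1:ℕ):ℝ)-((m+1:ℕ):ℝ)) * (-v)^(j+1)
        = ((((j:ℝ)+1)*α - m) * snk m (j+1) α) * y^(α*((j+1:ℕ):ℝ)-((m+1:ℕ):ℝ)) * (-v)^(j+1)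
          + (α * snk m j α) * y^(α*((j+1:ℕ):ℝ)-((m+1:ℕ):ℝ)) * (-v)^(j+1) := by
    intro j _
    rw [snk_rec]
    push_cast
    ring
  rw [Finset.sum_congr rfl step, Finset.sum_add_distrib]
  have hA : ∑ j ∈ Finset.range (m+1),
      ((((j:ℝ)+1)*α - m) * snk m (j+1) α) * y^(α*((j+1:ℕ):ℝ)-((m+1:ℕ):ℝ)) * (-v)^(j+1)
      = ∑ j ∈ Finset.range m,
        snk m (j+1) α * ((α*((j+1:ℕ):ℝ)-(m:ℝ)) * y^(α*((j+1:ℕ):ℝ)-(m:ℝ)-1)) * (-v)^(j+1) := by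
    rw [Finset.sum_range_succ, snk_top m (m+1) (lt_add_one m)]
    rw [show ((((m:ℝ)+1)*α - m) * 0) * y^(α*((m+1:ℕ):ℝ)-((m+1:ℕ):ℝ)) * (-v)^(m+1) = 0 by ring,
        add_zero]
    apply Finset.sum_congr rfl
    intro j _
    rw [show α*((j+1:ℕ):ℝ)-((m+1:ℕ):ℝ) = α*((j+1:ℕ):ℝ)-(m:ℝ)-1 by push_cast; ring]
    push_cast
    ring
  have hB : ∑ j ∈ Finset.range (m+1),
      (α * snk m j α) * y^(α*((j+1:ℕ):ℝ)-((m+1:ℕ):ℝ)) * (-v)^(j+1)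
      = (-v*(α*y^(α-1))) * ∑ j ∈ Finset.range m,
          snk m (j+1) α * y^(α*((j+1:ℕ):ℝ)-(m:ℝ)) * (-v)^(j+1) := by
    rw [Finset.sum_range_succ', snk_zero m hm]
    rw [show (α * 0) * y^(α*((0+1:ℕ):ℝ)-((m+1:ℕ):ℝ)) * (-v)^(0+1) = 0 by ring, add_zero]
    rw [Finset.mul_sum]
    apply Finset.sum_congr rfl
    intro j _
    rw [show α*((j+1+1:ℕ):ℝ)-((m+1:ℕ):ℝ) = (α-1) + (α*((j+1:ℕ):ℝ)-(m:ℝ)) by push_cast; ring,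
        Real.rpow_add hy, pow_succ]
    push_cast
    ring
  rw [hA, hB]
  ring



/-- Falling factorial `(x)_n = x (x-1) ⋯ (x-n+1)`, with `(x)_0 = 1`. -/
def ff (x : ℝ) (n : ℕ) : ℝ := ∏ i ∈ Finset.range n, (x - (i : ℝ))

/-- The index set `P_{n,k}`: tuples `(j_1, …, j_{n-k+1})`, 0-indexed by `Fin (n-k+1)`
(entry `i` representing `j_{i+1}`), with `∑ i·j_i = n` and `∑ j_i = k`. -/
def PIdx (n k : ℕ) : Finset (Fin (n - k + 1) → ℕ) :=
  (Fintype.piFinset fun _ => Finset.range (n + 1)).filter fun j =>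
    (∑ i, (i.1 + 1) * j i) = n ∧ (∑ i, j i) = k

/-- The partial Bell polynomial `B_{n,k}(x_1,…,x_{n-k+1})`, the `l`-th argument being `x l`. -/
def bellP (n k : ℕ) (x : ℕ → ℝ) : ℝ :=
  ∑ j ∈ PIdx n k,
    ((n.factorial : ℝ) / ∏ i, ((j i).factorial : ℝ)) *
      ∏ i, (x (i.1 + 1) / ((i.1 + 1).factorial : ℝ)) ^ j i

/-- The index set `Q^{d₀}_{d,k} = { j : ∑ j_s = k, 1 ≤ j_s ≤ d_s }`. -/
def QIdx (d0 : ℕ) (dv : Fin d0 → ℕ) (k : ℕ) : Finset (Fin d0 → ℕ) :=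
  (Fintype.piFinset fun s => Finset.Icc 1 (dv s)).filter fun j => (∑ s, j s) = k

/-- Complete monotonicity of `h` on `(0,∞)`: `h` is infinitely differentiable there and
`(-1)^k h^{(k)}(t) ≥ 0` for all `k ∈ ℕ₀` and `t ∈ (0,∞)`. -/
def CMOn (h : ℝ → ℝ) : Prop :=
  ContDiffOn ℝ (⊤ : ℕ∞) h (Set.Ioi 0) ∧
    ∀ k : ℕ, ∀ t ∈ Set.Ioi (0 : ℝ), 0 ≤ (-1 : ℝ) ^ k * iteratedDerivWithin k h (Set.Ioi 0) t

/-- Partial derivative of `F : ℝ^ι → ℝ` in the coordinate `i`. -/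
def pdrv {ι : Type*} [DecidableEq ι] (i : ι) (F : (ι → ℝ) → ℝ) : (ι → ℝ) → ℝ :=
  fun x => deriv (fun y => F (Function.update x i y)) (x i)

/-- for the inner generator `f(t) = exp(-v((1+t)^α - 1))` of a nested
Clayton copula, `f^{(n)}(t) = f(t) ∑_{k=1}^n s_{nk}(α) (1+t)^{αk-n} (-v)^k` on `(0,∞)`. -/
theorem stmt17 (α v : ℝ) (n : ℕ) (hn : 1 ≤ n) (t : ℝ) (ht : 0 < t) :
    iteratedDerivWithin n (fun u => Real.exp (-v * ((1 + u) ^ α - 1))) (Set.Ioi 0) t =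
      Real.exp (-v * ((1 + t) ^ α - 1)) *
        ∑ k ∈ Finset.Icc 1 n,
          snk n k α * (1 + t) ^ (α * (k : ℝ) - (n : ℝ)) * (-v) ^ k := by
  set f : ℝ → ℝ := fun u => Real.exp (-v * ((1 + u) ^ α - 1)) with hf
  have hfd : ∀ u : ℝ, 0 < u →
      HasDerivAt f (f u * (-v * (α * (1 + u) ^ (α - 1)))) u := by
    intro u hu
    have h1 : HasDerivAt (fun y : ℝ => 1 + y) 1 u := by
      simpa using (hasDerivAt_id u).const_add (1 : ℝ)
    have h2 : HasDerivAt (fun y : ℝ => (1 + y) ^ α) (α * (1 + u) ^ (α - 1)) u := by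
      have := h1.rpow_const (p := α) (Or.inl (by positivity))
      simpa using this
    have h3 : HasDerivAt (fun y : ℝ => -v * ((1 + y) ^ α - 1))
        (-v * (α * (1 + u) ^ (α - 1))) u := (h2.sub_const 1).const_mul (-v)
    simpa [hf, mul_comm] using h3.exp
  have key : ∀ m : ℕ, 1 ≤ m → ∀ u : ℝ, 0 < u →
      iteratedDerivWithin m f (Set.Ioi 0) u =
        f u * ∑ k ∈ Finset.Icc 1 m,
          snk m k α * (1 + u) ^ (α * (k : ℝ) - (m : ℝ)) * (-v) ^ k := by
    intro m hm
    induction m, hm using Nat.le_induction with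
    | base =>
      intro u hu
      rw [iteratedDerivWithin_one,
          derivWithin_of_isOpen isOpen_Ioi hu, (hfd u hu).deriv]
      simp only [Finset.Icc_self, Finset.sum_singleton, snk_one, Nat.cast_one, mul_one, pow_one]
      ring
    | succ m hm ih =>
      intro u hu
      rw [iteratedDerivWithin_succ,
          derivWithin_of_isOpen isOpen_Ioi hu]
      set G : ℝ → ℝ := fun y => f y * ∑ k ∈ Finset.Icc 1 m,
          snk m k α * (1 + y) ^ (α * (k : ℝ) - (m : ℝ)) * (-v) ^ k with hG
      have hev : iteratedDerivWithin m f (Set.Ioi 0) =ᶠ[nhds u] G := by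
        filter_upwards [isOpen_Ioi.mem_nhds hu] with y hy
        exact ih y hy
      rw [hev.deriv_eq]
      have hsum : HasDerivAt (fun y : ℝ => ∑ k ∈ Finset.Icc 1 m,
          snk m k α * (1 + y) ^ (α * (k : ℝ) - (m : ℝ)) * (-v) ^ k)
          (∑ k ∈ Finset.Icc 1 m,
            snk m k α * ((α * (k : ℝ) - (m : ℝ)) * (1 + u) ^ (α * (k : ℝ) - (m : ℝ) - 1)) * (-v) ^ k) u := by
        apply HasDerivAt.fun_sum
        intro k _
        have h1 : HasDerivAt (fun y : ℝ => 1 + y) 1 u := by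
          simpa using (hasDerivAt_id u).const_add (1 : ℝ)
        have h2 := h1.rpow_const (p := α * (k : ℝ) - (m : ℝ)) (Or.inl (by positivity))
        simpa [mul_comm, mul_assoc, mul_left_comm] using (h2.const_mul (snk m k α)).mul_const ((-v) ^ k)
      have hG' : HasDerivAt G
          (f u * (-v * (α * (1 + u) ^ (α - 1))) *
              (∑ k ∈ Finset.Icc 1 m, snk m k α * (1 + u) ^ (α * (k : ℝ) - (m : ℝ)) * (-v) ^ k)
            + f u * ∑ k ∈ Finset.Icc 1 m,
              snk m k α * ((α * (k : ℝ) - (m : ℝ)) * (1 + u) ^ (α * (k : ℝ) - (m : ℝ) - 1)) * (-v) ^ k) u :=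
        (hfd u hu).mul hsum
      rw [hG'.deriv]
      have hy : (0:ℝ) < 1 + u := by linarith
      rw [mul_assoc, ← mul_add]
      congr 1
      exact alg α v (1 + u) hy m hm
  exact key n hn t ht
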